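/- arXiv:1103.5271 — 2 statements merged into one kernel-verified Lean document; each statement's English description precedes it below -/
import Mathlib

section
/- For every ε > 0 there exists C > 0 such that for every real N ≥ 1 and every v, w ∈ ℓ²(ℤ; ℂ), with N₁₁(v)(n) := ∑_{(n₁,n₂,n₃): n = n₁ − n₂ + n₃, n₂ ∉ {n₁,n₃}, |2(n−n₁)(n−n₃)| ≤ N} v_{n₁} · conj(v_{n₂}) · v_{n₃} (a finite sum for each n), one has ‖N₁₁(v) − N₁₁(w)‖ ≤ C N^{1/2 + ε} (‖v‖² + ‖w‖²) ‖v − w‖ in ℓ²(ℤ; ℂ). -/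
open scoped BigOperators ComplexConjugate

/-- The ℓ²(ℤ;ℂ) norm `(∑ₙ |vₙ|²)^{1/2}`. -/
noncomputable def l2norm (v : ℤ → ℂ) : ℝ := Real.sqrt (∑' n : ℤ, ‖v n‖ ^ 2)

/-- Membership in ℓ²(ℤ;ℂ). -/
def Memℓ2 (v : ℤ → ℂ) : Prop := Summable fun n : ℤ => ‖v n‖ ^ 2

/-- The phase `Φ = 2(n − n₁)(n − n₃)` for a triple `p = (n₁, n₂, n₃)`. -/
def phase (n : ℤ) (p : ℤ × ℤ × ℤ) : ℤ := 2 * (n - p.1) * (n - p.2.2)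

/-- The small-phase non-resonant condition: `n = n₁ − n₂ + n₃`, `n₂ ∉ {n₁, n₃}`,
`|2(n − n₁)(n − n₃)| ≤ N`. -/
def smallPhase (N : ℝ) (n : ℤ) (p : ℤ × ℤ × ℤ) : Prop :=
  n = p.1 - p.2.1 + p.2.2 ∧ p.2.1 ≠ p.1 ∧ p.2.1 ≠ p.2.2 ∧ |((phase n p : ℤ) : ℝ)| ≤ N

/-- The small-phase part `N₁₁(v)(n)` of the cubic nonlinearity (a finite sum for each `n`). -/
noncomputable def N11 (N : ℝ) (v : ℤ → ℂ) (n : ℤ) : ℂ :=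
  ∑' p : {p : ℤ × ℤ × ℤ // smallPhase N n p}, v p.1.1 * conj (v p.1.2.1) * v p.1.2.2

/-!
With `a = n - n₁` and `c = n - n₃`, `N₁₁(v)(n)` is the sum of `v(n-a) conj(v(n-a-c)) v(n-c)` over the
finite set `S_N` of pairs with `a, c ≠ 0` and `|2ac| ≤ N`, independent of `n`. For such a trilinear
form, Cauchy–Schwarz over `S_N` followed by translation invariance of the ℓ² mass gives
`‖T(u₁, u₂, u₃)‖² ≤ #S_N ‖u₁‖² ‖u₂‖² ‖u₃‖²`, and trilinearity writes `N₁₁(v) - N₁₁(w)` as three such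
terms, each with one entry `v - w`. Finally `#S_N ≲_δ N^{1+δ}`: every `(a, c) ∈ S_N` has
`1 ≤ (N / |ac|)^{1+δ}`, and `∑_{a,c ≠ 0} |ac|^{-(1+δ)}` converges.
-/

open scoped ENNReal NNReal
open Finset

section Translation

variable {G M : Type*} [AddGroup G] [AddCommMonoid M] [TopologicalSpace M] (f : G → M) (k : G)

theorem tsum_comp_add_left : ∑' n, f (k + n) = ∑' n, f n := (Equiv.addLeft k).tsum_eq f

theorem tsum_comp_add_right : ∑' n, f (n + k) = ∑' n, f n := (Equiv.addRight k).tsum_eq f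

theorem tsum_comp_sub_left : ∑' n, f (k - n) = ∑' n, f n := (Equiv.subLeft k).tsum_eq f

end Translation

namespace ENNReal

theorem sq_sum_coe_le_card_mul_sum_sq {ι : Type*} (s : Finset ι) (f : ι → ℝ≥0) :
    (∑ i ∈ s, (f i : ℝ≥0∞)) ^ 2 ≤ #s * ∑ i ∈ s, (f i : ℝ≥0∞) ^ 2 := by
  exact_mod_cast sq_sum_le_card_mul_sum_sq (s := s) (f := f)

theorem tsum_translates_mul {G : Type*} [AddCommGroup G] (f g h : G → ℝ≥0∞) :
    ∑' q : G × G, ∑' n, f (n - q.1) * g (n - q.1 - q.2) * h (n - q.2)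
      = (∑' n, f n) * (∑' n, g n) * (∑' n, h n) := by
  have shift (a c : G) : ∑' n, f (n - a) * g (n - a - c) * h (n - c)
      = ∑' m, f m * g (m - c) * h (m - c + a) := by
    rw [← tsum_comp_add_right _ a]
    simp only [add_sub_cancel_right, add_sub_right_comm]
  calc ∑' q : G × G, ∑' n, f (n - q.1) * g (n - q.1 - q.2) * h (n - q.2)
      = ∑' c, ∑' m, ∑' a, f m * g (m - c) * h (m - c + a) := by
        simp only [ENNReal.tsum_prod', shift]
        rw [ENNReal.tsum_comm]
        exact tsum_congr fun c => ENNReal.tsum_comm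
    _ = (∑' n, f n) * (∑' n, g n) * (∑' n, h n) := by
        rw [ENNReal.tsum_comm]
        simp only [ENNReal.tsum_mul_left, tsum_comp_add_left, ENNReal.tsum_mul_right,
          tsum_comp_sub_left]

end ENNReal

noncomputable def l2enormSq (u : ℤ → ℂ) : ℝ≥0∞ := ∑' n, ‖u n‖ₑ ^ 2

theorem memℓ2_iff_l2enormSq_ne_top {u : ℤ → ℂ} : Memℓ2 u ↔ l2enormSq u ≠ ⊤ := by
  have := ENNReal.tsum_coe_ne_top_iff_summable_coe (f := fun n => ‖u n‖₊ ^ 2)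
  push_cast at this
  simpa [Memℓ2, l2enormSq, enorm_eq_nnnorm] using this.symm

theorem l2norm_eq_sqrt_toReal (u : ℤ → ℂ) : l2norm u = √(l2enormSq u).toReal := by
  rw [l2enormSq, ENNReal.tsum_toReal_eq fun n => by finiteness]
  simp [l2norm]

theorem l2norm_nonneg (u : ℤ → ℂ) : 0 ≤ l2norm u := Real.sqrt_nonneg _

theorem l2enormSq_eq_ofReal {u : ℤ → ℂ} (hu : Memℓ2 u) :
    l2enormSq u = ENNReal.ofReal (l2norm u ^ 2) := by
  rw [l2norm_eq_sqrt_toReal, Real.sq_sqrt ENNReal.toReal_nonneg,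
    ENNReal.ofReal_toReal (memℓ2_iff_l2enormSq_ne_top.mp hu)]

theorem memℓ2_and_l2norm_le_of_l2enormSq_le {u : ℤ → ℂ} {B : ℝ} (hB : 0 ≤ B)
    (h : l2enormSq u ≤ ENNReal.ofReal (B ^ 2)) : Memℓ2 u ∧ l2norm u ≤ B := by
  refine ⟨memℓ2_iff_l2enormSq_ne_top.mpr (ne_top_of_le_ne_top ENNReal.ofReal_ne_top h), ?_⟩
  rw [l2norm_eq_sqrt_toReal, ← Real.sqrt_sq hB]
  exact Real.sqrt_le_sqrt (ENNReal.toReal_le_of_le_ofReal (sq_nonneg B) h)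

theorem memℓ2_iff_memℓp {u : ℤ → ℂ} : Memℓ2 u ↔ Memℓp u 2 := by
  rw [memℓp_gen_iff (by norm_num)]
  simp [Memℓ2]

theorem Memℓ2.sub {v w : ℤ → ℂ} (hv : Memℓ2 v) (hw : Memℓ2 w) : Memℓ2 (v - w) :=
  memℓ2_iff_memℓp.mpr ((memℓ2_iff_memℓp.mp hv).sub (memℓ2_iff_memℓp.mp hw))

theorem l2enormSq_add_add_le (f g h : ℤ → ℂ) :
    l2enormSq (f + g + h) ≤ 3 * (l2enormSq f + l2enormSq g + l2enormSq h) := by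
  simp only [l2enormSq, ← ENNReal.tsum_add, ← ENNReal.tsum_mul_left]
  refine ENNReal.tsum_le_tsum fun n => ?_
  calc ‖(f + g + h) n‖ₑ ^ 2 ≤ (‖f n‖ₑ + ‖g n‖ₑ + ‖h n‖ₑ) ^ 2 := by
        gcongr
        exact (enorm_add_le _ _).trans (by gcongr; exact enorm_add_le _ _)
    _ ≤ 3 * (‖f n‖ₑ ^ 2 + ‖g n‖ₑ ^ 2 + ‖h n‖ₑ ^ 2) := by
        simpa [Fin.sum_univ_three, enorm_eq_nnnorm, add_assoc] using
          ENNReal.sq_sum_coe_le_card_mul_sum_sq univ ![‖f n‖₊, ‖g n‖₊, ‖h n‖₊]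

noncomputable def trilinear (S : Finset (ℤ × ℤ)) (u₁ u₂ u₃ : ℤ → ℂ) (n : ℤ) : ℂ :=
  ∑ q ∈ S, u₁ (n - q.1) * conj (u₂ (n - q.1 - q.2)) * u₃ (n - q.2)

theorem trilinear_sub (S : Finset (ℤ × ℤ)) (v w : ℤ → ℂ) :
    trilinear S v v v - trilinear S w w w
      = trilinear S (v - w) v v + trilinear S w (v - w) v + trilinear S w w (v - w) := by
  ext n
  simp only [trilinear, Pi.add_apply, Pi.sub_apply, ← sum_sub_distrib, ← sum_add_distrib, map_sub]
  exact sum_congr rfl fun _ _ => by ring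

theorem l2enormSq_trilinear_le (S : Finset (ℤ × ℤ)) (u₁ u₂ u₃ : ℤ → ℂ) :
    l2enormSq (trilinear S u₁ u₂ u₃) ≤ #S * (l2enormSq u₁ * l2enormSq u₂ * l2enormSq u₃) := by
  set F : ℤ × ℤ → ℤ → ℝ≥0∞ := fun q n =>
    (‖u₁ (n - q.1)‖ₑ * ‖u₂ (n - q.1 - q.2)‖ₑ * ‖u₃ (n - q.2)‖ₑ) ^ 2
  have pointwise (n : ℤ) : ‖trilinear S u₁ u₂ u₃ n‖ₑ ^ 2 ≤ #S * ∑ q ∈ S, F q n :=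
    calc ‖trilinear S u₁ u₂ u₃ n‖ₑ ^ 2
        ≤ (∑ q ∈ S, ‖u₁ (n - q.1)‖ₑ * ‖u₂ (n - q.1 - q.2)‖ₑ * ‖u₃ (n - q.2)‖ₑ) ^ 2 := by
          gcongr
          refine (enorm_sum_le _ _).trans_eq ?_
          simp [enorm_mul]
      _ ≤ #S * ∑ q ∈ S, F q n := by
          simpa [F, enorm_eq_nnnorm, mul_pow] using ENNReal.sq_sum_coe_le_card_mul_sum_sq S
            fun q => ‖u₁ (n - q.1)‖₊ * ‖u₂ (n - q.1 - q.2)‖₊ * ‖u₃ (n - q.2)‖₊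
  calc l2enormSq (trilinear S u₁ u₂ u₃) ≤ ∑' n, #S * ∑ q ∈ S, F q n :=
        ENNReal.tsum_le_tsum pointwise
    _ = #S * ∑ q ∈ S, ∑' n, F q n := by
        rw [ENNReal.tsum_mul_left, Summable.tsum_finsetSum fun _ _ => ENNReal.summable]
    _ ≤ #S * ∑' q, ∑' n, F q n := by
        gcongr
        exact ENNReal.sum_le_tsum S
    _ = #S * (l2enormSq u₁ * l2enormSq u₂ * l2enormSq u₃) := by
        simp only [F, mul_pow, l2enormSq]
        rw [ENNReal.tsum_translates_mul (‖u₁ ·‖ₑ ^ 2) (‖u₂ ·‖ₑ ^ 2) (‖u₃ ·‖ₑ ^ 2)]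

noncomputable def smallPhasePairs (N : ℝ) : Finset (ℤ × ℤ) :=
  (Icc (-⌊N⌋) ⌊N⌋ ×ˢ Icc (-⌊N⌋) ⌊N⌋).filter
    fun q => q.1 ≠ 0 ∧ q.2 ≠ 0 ∧ |((2 * q.1 * q.2 : ℤ) : ℝ)| ≤ N

theorem mem_smallPhasePairs {N : ℝ} {q : ℤ × ℤ} :
    q ∈ smallPhasePairs N ↔ q.1 ≠ 0 ∧ q.2 ≠ 0 ∧ |((2 * q.1 * q.2 : ℤ) : ℝ)| ≤ N := by
  refine ⟨fun h => (mem_filter.mp h).2, fun h => mem_filter.mpr ⟨?_, h⟩⟩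
  have mem_box {a c : ℤ} (hc : c ≠ 0) (h : |((2 * a * c : ℤ) : ℝ)| ≤ N) :
      a ∈ Icc (-⌊N⌋) ⌊N⌋ := by
    have : |a| ≤ |2 * a * c| := by
      rw [abs_mul, abs_mul, abs_two]
      nlinarith [Int.one_le_abs hc, abs_nonneg a]
    rw [mem_Icc, ← abs_le, Int.le_floor, Int.cast_abs]
    exact le_trans (by rw [← Int.cast_abs]; exact_mod_cast this) h
  obtain ⟨ha, hc, hN⟩ := h
  exact mem_product.mpr ⟨mem_box hc hN, mem_box ha (by rwa [mul_right_comm])⟩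

def smallPhaseEquiv (N : ℝ) (n : ℤ) :
    smallPhasePairs N ≃ {p : ℤ × ℤ × ℤ // smallPhase N n p} where
  toFun q := ⟨(n - q.1.1, n - q.1.1 - q.1.2, n - q.1.2), by
    obtain ⟨ha, hc, hN⟩ := mem_smallPhasePairs.mp q.2
    exact ⟨by ring, by simpa using hc, by simpa using ha, by simpa [phase] using hN⟩⟩
  invFun p := ⟨(n - p.1.1, n - p.1.2.2), by
    obtain ⟨h, h₁, h₃, hN⟩ := p.2
    exact mem_smallPhasePairs.mpr ⟨by omega, by omega, hN⟩⟩
  left_inv q := by ext <;> simp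
  right_inv p := by
    obtain ⟨⟨n₁, n₂, n₃⟩, h, -⟩ := p
    ext <;> simp only at h ⊢ <;> omega

theorem N11_eq_trilinear (N : ℝ) (v : ℤ → ℂ) :
    N11 N v = trilinear (smallPhasePairs N) v v v := by
  ext n
  rw [N11, ← (smallPhaseEquiv N n).tsum_eq]
  exact Finset.tsum_subtype (smallPhasePairs N)
    fun q => v (n - q.1) * conj (v (n - q.1 - q.2)) * v (n - q.2)

theorem l2enormSq_N11_sub_le (N : ℝ) (v w : ℤ → ℂ) :
    l2enormSq (N11 N v - N11 N w) ≤ 3 * #(smallPhasePairs N) *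
      ((l2enormSq v + l2enormSq w) ^ 2 * l2enormSq (v - w)) := by
  rw [N11_eq_trilinear, N11_eq_trilinear, trilinear_sub]
  refine (l2enormSq_add_add_le _ _ _).trans ?_
  set S := smallPhasePairs N
  set d := v - w
  calc 3 * (l2enormSq (trilinear S d v v) + l2enormSq (trilinear S w d v)
        + l2enormSq (trilinear S w w d))
      ≤ 3 * (#S * (l2enormSq d * l2enormSq v * l2enormSq v)
        + #S * (l2enormSq w * l2enormSq d * l2enormSq v)
        + #S * (l2enormSq w * l2enormSq w * l2enormSq d)) := by
        gcongr <;> exact l2enormSq_trilinear_le ..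
    _ ≤ 3 * (#S * (l2enormSq d * l2enormSq v * l2enormSq v)
        + 2 * (#S * (l2enormSq w * l2enormSq d * l2enormSq v))
        + #S * (l2enormSq w * l2enormSq w * l2enormSq d)) := by
        gcongr 3 * (_ + ?_ + _)
        rw [two_mul]
        exact le_add_self
    _ = 3 * #S * ((l2enormSq v + l2enormSq w) ^ 2 * l2enormSq d) := by ring

theorem card_smallPhasePairs_le {δ N : ℝ} (hδ : 0 < δ) (hN : 0 ≤ N) :
    (#(smallPhasePairs N) : ℝ) ≤ (∑' a : ℤ, |(a : ℝ)| ^ (-(1 + δ))) ^ 2 * N ^ (1 + δ) := by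
  set W : ℤ → ℝ := fun a => |(a : ℝ)| ^ (-(1 + δ))
  have hW : Summable W := Real.summable_abs_int_rpow (by linarith)
  have hW0 : 0 ≤ W := fun _ => by positivity
  have one_le (q : ℤ × ℤ) (hq : q ∈ smallPhasePairs N) : 1 ≤ N ^ (1 + δ) * (W q.1 * W q.2) := by
    obtain ⟨ha, hc, hphase⟩ := mem_smallPhasePairs.mp hq
    have hpos : 0 < |(q.1 : ℝ)| * |(q.2 : ℝ)| := by positivity
    have hle : |(q.1 : ℝ)| * |(q.2 : ℝ)| ≤ N := by
      push_cast at hphase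
      rw [abs_mul, abs_mul, abs_two] at hphase
      linarith
    rw [← Real.mul_rpow (abs_nonneg _) (abs_nonneg _), Real.rpow_neg hpos.le, ← div_eq_mul_inv,
      one_le_div (by positivity)]
    exact Real.rpow_le_rpow hpos.le hle (by linarith)
  calc (#(smallPhasePairs N) : ℝ) = ∑ q ∈ smallPhasePairs N, 1 := by simp
    _ ≤ ∑ q ∈ smallPhasePairs N, N ^ (1 + δ) * (W q.1 * W q.2) := sum_le_sum one_le
    _ = N ^ (1 + δ) * ∑ q ∈ smallPhasePairs N, W q.1 * W q.2 := (mul_sum ..).symm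
    _ ≤ N ^ (1 + δ) * ∑' q : ℤ × ℤ, W q.1 * W q.2 := by
        gcongr
        exact (hW.mul_of_nonneg hW hW0 hW0).sum_le_tsum _ (fun _ _ => by positivity)
    _ = (∑' a, W a) ^ 2 * N ^ (1 + δ) := by
        rw [← hW.tsum_mul_tsum hW (hW.mul_of_nonneg hW hW0 hW0)]
        ring

theorem l2norm_N11_sub_le (N : ℝ) {v w : ℤ → ℂ} (hv : Memℓ2 v) (hw : Memℓ2 w) :
    Memℓ2 (N11 N v - N11 N w) ∧ l2norm (N11 N v - N11 N w)
      ≤ √(3 * #(smallPhasePairs N)) * (l2norm v ^ 2 + l2norm w ^ 2) * l2norm (v - w) := by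
  have hd := l2norm_nonneg (v - w)
  refine memℓ2_and_l2norm_le_of_l2enormSq_le (by positivity)
    ((l2enormSq_N11_sub_le N v w).trans_eq ?_)
  rw [l2enormSq_eq_ofReal hv, l2enormSq_eq_ofReal hw, l2enormSq_eq_ofReal (hv.sub hw),
    mul_pow, mul_pow, Real.sq_sqrt (by positivity)]
  conv_rhs => rw [ENNReal.ofReal_mul (by positivity), ENNReal.ofReal_mul (by positivity),
    ENNReal.ofReal_mul (by positivity), ENNReal.ofReal_pow (by positivity),
    ENNReal.ofReal_add (by positivity) (by positivity)]
  simp [mul_assoc]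

/-- **Lipschitz bound for the small-phase trilinear term `N₁₁`.** For every `ε > 0` there is
`C > 0` such that for all `N ≥ 1` and `v, w ∈ ℓ²(ℤ;ℂ)`:
`‖N₁₁(v) − N₁₁(w)‖ ≤ C N^{1/2+ε} (‖v‖² + ‖w‖²) ‖v − w‖` in `ℓ²(ℤ;ℂ)`. -/
theorem N11_diff_bound : ∀ ε > (0:ℝ), ∃ C > (0:ℝ), ∀ N : ℝ, 1 ≤ N →
    ∀ v w : ℤ → ℂ, Memℓ2 v → Memℓ2 w →
    Memℓ2 (fun n => N11 N v n - N11 N w n) ∧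
    l2norm (fun n => N11 N v n - N11 N w n)
      ≤ C * N ^ ((1:ℝ)/2 + ε) * (l2norm v ^ 2 + l2norm w ^ 2) *
        l2norm (fun n => v n - w n) := by
  intro ε hε
  set Z := ∑' a : ℤ, |(a : ℝ)| ^ (-(1 + 2 * ε))
  have hZ : 0 < Z :=
    (Real.summable_abs_int_rpow (by linarith)).tsum_pos (fun _ => by positivity) 1 (by simp)
  refine ⟨√3 * Z, by positivity, fun N hN v w hv hw => ?_⟩
  obtain ⟨hmem, hle⟩ := l2norm_N11_sub_le N hv hw
  refine ⟨hmem, hle.trans ?_⟩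
  have hcard : √(3 * #(smallPhasePairs N)) ≤ √3 * Z * N ^ ((1:ℝ)/2 + ε) := by
    calc √(3 * #(smallPhasePairs N)) ≤ √(3 * (Z ^ 2 * N ^ (1 + 2 * ε))) := by
          gcongr
          exact card_smallPhasePairs_le (by positivity) (by linarith)
      _ = √3 * Z * N ^ ((1:ℝ)/2 + ε) := by
          rw [Real.sqrt_mul (by norm_num), Real.sqrt_mul (by positivity), Real.sqrt_sq hZ.le,
            Real.sqrt_eq_rpow (N ^ _), ← Real.rpow_mul (by linarith)]
          ring_nf
  have hd := l2norm_nonneg (v - w)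
  show _ ≤ _ * l2norm (v - w)
  gcongr
end

section
/- For every ε > 0 there exists C > 0 such that for every real N ≥ 1, every t ∈ ℝ, and every v ∈ ℓ²(ℤ; ℂ): writing R(v)_m := |v_m|² v_m − 2(∑_{k ∈ ℤ} |v_k|²) v_m, for each n ∈ ℤ the series N₄(v)(n) := ∑_{(n₁,n₂,n₃): n = n₁ − n₂ + n₃, n₂ ∉ {n₁,n₃}, |Φ| > N} (e^{−iΦt}/Φ) · R(v)_{n₁} · conj(v_{n₂}) · v_{n₃}, where Φ = 2(n − n₁)(n − n₃), converges absolutely, and the resulting function belongs to ℓ²(ℤ; ℂ) with ‖N₄(v)‖ ≤ C N^{−1/2 + ε} ‖v‖⁵. -/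
/-!
Put `a = n - n₁`, `b = n - n₃`; then `n₂ = n - a - b`, `|Φ| = 2|a||b|` with `a, b ≠ 0`, and the
triple is determined by `(a, b)`. With `s = min (1/2 + ε) 1`, splitting `|Φ|⁻¹ = |Φ|^(s-1) |Φ|^(-s)`
gives `|Φ|⁻¹ ≤ N^(s-1) (|a||b|)^(-s)`, and `|R(v)ₘ| ≤ 3‖v‖² |vₘ|`, so
`|N₄(v)(n)| ≤ 3‖v‖² N^(s-1) ∑_{a,b} |a|^(-s) |b|^(-s) |v_{n-a}| |v_{n-a-b}| |v_{n-b}|`.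
Cauchy–Schwarz in `(a, b)`, pairing `|a|^(-s) |b|^(-s) |v_{n-a-b}|` with `|v_{n-a}| |v_{n-b}|`,
bounds the square of this sum by `‖v‖⁴ ∑_{a,b} |a|^(-2s) |b|^(-2s) |v_{n-a-b}|²`; summing over `n`
gives `A² ‖v‖⁶` with `A = ∑ₘ |m|^(-2s)`, finite since `2s > 1`.
-/

open scoped BigOperators ComplexConjugate

/-- The large-phase non-resonant condition: `n = n₁ − n₂ + n₃`, `n₂ ∉ {n₁, n₃}`, `|Φ| > N`. -/
def largePhase (N : ℝ) (n : ℤ) (p : ℤ × ℤ × ℤ) : Prop :=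
  n = p.1 - p.2.1 + p.2.2 ∧ p.2.1 ≠ p.1 ∧ p.2.1 ≠ p.2.2 ∧ N < |((phase n p : ℤ) : ℝ)|

/-- The resonant part `R(v)ₘ = |vₘ|² vₘ − 2(∑ₖ |vₖ|²) vₘ` of the cubic nonlinearity. -/
noncomputable def Rres (v : ℤ → ℂ) (m : ℤ) : ℂ :=
  (‖v m‖ : ℂ) ^ 2 * v m - 2 * ((∑' k : ℤ, ‖v k‖ ^ 2 : ℝ) : ℂ) * v m

/-- The summand `(e^{−iΦt}/Φ) R(v)_{n₁} conj(v_{n₂}) v_{n₃}` of the term `N₄`. -/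
noncomputable def term4 (t : ℝ) (v : ℤ → ℂ) (n : ℤ) (p : ℤ × ℤ × ℤ) : ℂ :=
  Complex.exp (-Complex.I * ((phase n p : ℤ) : ℂ) * (t : ℂ)) / ((phase n p : ℤ) : ℂ) *
    Rres v p.1 * conj (v p.2.1) * v p.2.2

/-- The quintic term `N₄(v)(n)` arising when the time derivative lands on a resonant cubic. -/
noncomputable def N4 (N t : ℝ) (v : ℤ → ℂ) (n : ℤ) : ℂ :=
  ∑' p : {p : ℤ × ℤ × ℤ // largePhase N n p}, term4 t v n p.1

theorem summable_mul_and_tsum_mul_le_sqrt {ι : Type*} {f g : ι → ℝ}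
    (hf2 : Summable fun i => f i ^ 2) (hg2 : Summable fun i => g i ^ 2) (hf : ∀ i, 0 ≤ f i) (hg : ∀ i, 0 ≤ g i) :
    (Summable fun i => f i * g i) ∧
      ∑' i, f i * g i ≤ √(∑' i, f i ^ 2) * √(∑' i, g i ^ 2) := by
  have := Real.summable_and_inner_le_Lp_mul_Lq_tsum_of_nonneg Real.HolderConjugate.two_two hf hg
    (by simpa using hf2) (by simpa using hg2)
  simpa [Real.sqrt_eq_rpow] using this

theorem hasSum_mul_of_nonneg {ι κ : Type*} {f : ι → ℝ} {g : κ → ℝ} {a b : ℝ}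
    (hf : HasSum f a) (hg : HasSum g b) (hf0 : ∀ i, 0 ≤ f i) (hg0 : ∀ k, 0 ≤ g k) :
    HasSum (fun x : ι × κ => f x.1 * g x.2) (a * b) :=
  hf.mul hg (hf.summable.mul_of_nonneg hg.summable hf0 hg0)

theorem summable_sq_abs_int_rpow_neg {s : ℝ} (hs : 1 / 2 < s) :
    Summable fun m : ℤ => (|(m : ℝ)| ^ (-s)) ^ 2 := by
  refine (Real.summable_abs_int_rpow (b := 2 * s) (by linarith)).congr fun m => ?_
  rw [← Real.rpow_natCast, ← Real.rpow_mul (abs_nonneg _)]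
  ring_nf

section Trilinear

variable {g w : ℤ → ℝ}

def trilinearSummand (g w : ℤ → ℝ) (n : ℤ) (q : ℤ × ℤ) : ℝ :=
  g q.1 * g q.2 * (w (n - q.1) * w (n - q.1 - q.2) * w (n - q.2))

theorem hasSum_sq_mul_mul_comp_sub_sub
    (hg : Summable fun m => g m ^ 2) (hw : Summable fun m => w m ^ 2) :
    HasSum (fun r : ℤ × (ℤ × ℤ) => (g r.2.1 * g r.2.2 * w (r.1 - r.2.1 - r.2.2)) ^ 2)
      ((∑' m, g m ^ 2) ^ 2 * ∑' m, w m ^ 2) := by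
  -- `(a, b, c) ↦ (a + b + c, (a, b))` turns the summand into `g a ^ 2 * g b ^ 2 * w c ^ 2`.
  let e : ℤ × ℤ × ℤ ≃ ℤ × (ℤ × ℤ) :=
    { toFun := fun r => (r.1 + r.2.1 + r.2.2, (r.1, r.2.1))
      invFun := fun r => (r.2.1, r.2.2, r.1 - r.2.1 - r.2.2)
      left_inv := fun r => by ext <;> simp; ring
      right_inv := fun r => by ext <;> simp }
  refine e.hasSum_iff.mp ?_
  have hprod := hasSum_mul_of_nonneg hg.hasSum
    (hasSum_mul_of_nonneg hg.hasSum hw.hasSum (fun _ => sq_nonneg _) fun _ => sq_nonneg _)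
    (fun _ => sq_nonneg _) fun _ => mul_nonneg (sq_nonneg _) (sq_nonneg _)
  convert hprod using 1
  · ext r
    simp only [Function.comp_apply, e, Equiv.coe_fn_mk]
    ring_nf
  · ring

theorem hasSum_sq_comp_sub_mul_comp_sub (hw : Summable fun m => w m ^ 2) (n : ℤ) :
    HasSum (fun q : ℤ × ℤ => (w (n - q.1) * w (n - q.2)) ^ 2) ((∑' m, w m ^ 2) ^ 2) := by
  have hshift : HasSum (fun a => w (n - a) ^ 2) (∑' m, w m ^ 2) :=
    (Equiv.subLeft n).hasSum_iff.mpr hw.hasSum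
  convert hasSum_mul_of_nonneg hshift hshift (fun _ => sq_nonneg _) fun _ => sq_nonneg _
    using 1
  · ext q; ring
  · ring

theorem trilinearSummand_nonneg (hg0 : ∀ m, 0 ≤ g m) (hw0 : ∀ m, 0 ≤ w m) (n : ℤ)
    (q : ℤ × ℤ) : 0 ≤ trilinearSummand g w n q :=
  mul_nonneg (mul_nonneg (hg0 _) (hg0 _)) (mul_nonneg (mul_nonneg (hw0 _) (hw0 _)) (hw0 _))

theorem summable_trilinearSummand_and_sq_tsum_le (hg0 : ∀ m, 0 ≤ g m) (hw0 : ∀ m, 0 ≤ w m)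
    (hg : Summable fun m => g m ^ 2) (hw : Summable fun m => w m ^ 2) (n : ℤ) :
    Summable (trilinearSummand g w n) ∧
      (∑' q, trilinearSummand g w n q) ^ 2 ≤
        (∑' q : ℤ × ℤ, (g q.1 * g q.2 * w (n - q.1 - q.2)) ^ 2) * (∑' m, w m ^ 2) ^ 2 := by
  have hX : Summable fun q : ℤ × ℤ => (g q.1 * g q.2 * w (n - q.1 - q.2)) ^ 2 :=
    (hasSum_sq_mul_mul_comp_sub_sub hg hw).summable.prod_factor n
  have hY := hasSum_sq_comp_sub_mul_comp_sub hw n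
  have hX0 (q : ℤ × ℤ) : 0 ≤ g q.1 * g q.2 * w (n - q.1 - q.2) :=
    mul_nonneg (mul_nonneg (hg0 q.1) (hg0 q.2)) (hw0 _)
  have hY0 (q : ℤ × ℤ) : 0 ≤ w (n - q.1) * w (n - q.2) := mul_nonneg (hw0 _) (hw0 _)
  obtain ⟨hsum, hle⟩ := summable_mul_and_tsum_mul_le_sqrt hX hY.summable hX0 hY0
  have hsplit (q : ℤ × ℤ) : trilinearSummand g w n q =
      g q.1 * g q.2 * w (n - q.1 - q.2) * (w (n - q.1) * w (n - q.2)) := by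
    unfold trilinearSummand; ring
  refine ⟨hsum.congr fun q => (hsplit q).symm, ?_⟩
  rw [tsum_congr hsplit]
  calc _ ≤ (√(∑' q : ℤ × ℤ, (g q.1 * g q.2 * w (n - q.1 - q.2)) ^ 2) *
        √(∑' q : ℤ × ℤ, (w (n - q.1) * w (n - q.2)) ^ 2)) ^ 2 :=
        pow_le_pow_left₀ (tsum_nonneg fun q => mul_nonneg (hX0 q) (hY0 q)) hle 2
    _ = _ := by
        rw [mul_pow, Real.sq_sqrt (tsum_nonneg fun _ => sq_nonneg _),
          Real.sq_sqrt (tsum_nonneg fun _ => sq_nonneg _), hY.tsum_eq]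

theorem summable_sq_tsum_trilinearSummand_and_tsum_le (hg0 : ∀ m, 0 ≤ g m)
    (hw0 : ∀ m, 0 ≤ w m) (hg : Summable fun m => g m ^ 2) (hw : Summable fun m => w m ^ 2) :
    (∀ n, Summable (trilinearSummand g w n)) ∧
      (Summable fun n => (∑' q, trilinearSummand g w n q) ^ 2) ∧
      ∑' n, (∑' q, trilinearSummand g w n q) ^ 2 ≤
        (∑' m, g m ^ 2) ^ 2 * (∑' m, w m ^ 2) ^ 3 := by
  have hH := hasSum_sq_mul_mul_comp_sub_sub hg hw
  have hS := (hH.prod_fiberwise fun n => (hH.summable.prod_factor n).hasSum).mul_right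
    ((∑' m, w m ^ 2) ^ 2)
  have hT n := summable_trilinearSummand_and_sq_tsum_le hg0 hw0 hg hw n
  have hTsum : Summable fun n => (∑' q, trilinearSummand g w n q) ^ 2 :=
    hS.summable.of_nonneg_of_le (fun _ => sq_nonneg _) fun n => (hT n).2
  refine ⟨fun n => (hT n).1, hTsum, ?_⟩
  calc _ ≤ _ := hTsum.tsum_le_tsum (fun n => (hT n).2) hS.summable
    _ = _ := by rw [hS.tsum_eq]; ring

end Trilinear

theorem norm_Rres_le {v : ℤ → ℂ} (hv : Memℓ2 v) (m : ℤ) :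
    ‖Rres v m‖ ≤ 3 * (∑' k, ‖v k‖ ^ 2) * ‖v m‖ := by
  have hm : ‖v m‖ ^ 2 ≤ ∑' k, ‖v k‖ ^ 2 := hv.le_tsum m fun k _ => sq_nonneg _
  have hE : 0 ≤ ∑' k, ‖v k‖ ^ 2 := tsum_nonneg fun _ => sq_nonneg _
  calc ‖Rres v m‖
      ≤ ‖(‖v m‖ : ℂ) ^ 2 * v m‖ + ‖2 * ((∑' k, ‖v k‖ ^ 2 : ℝ) : ℂ) * v m‖ := norm_sub_le _ _
    _ = ‖v m‖ ^ 2 * ‖v m‖ + 2 * (∑' k, ‖v k‖ ^ 2) * ‖v m‖ := by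
        simp [abs_of_nonneg hE]
    _ ≤ _ := by nlinarith [norm_nonneg (v m)]

theorem norm_term4 (t : ℝ) (v : ℤ → ℂ) (n : ℤ) (p : ℤ × ℤ × ℤ) :
    ‖term4 t v n p‖ = |(phase n p : ℝ)|⁻¹ * (‖Rres v p.1‖ * ‖v p.2.1‖ * ‖v p.2.2‖) := by
  simp [term4, Complex.norm_exp]
  ring

theorem inv_le_rpow_mul_rpow_neg {N x y s : ℝ} (hN : 0 < N) (hNx : N ≤ x) (hy : 0 < y)
    (hyx : y ≤ x) (hs0 : 0 ≤ s) (hs1 : s ≤ 1) : x⁻¹ ≤ N ^ (s - 1) * y ^ (-s) := by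
  have hx : 0 < x := hN.trans_le hNx
  calc x⁻¹ = x ^ (s - 1) * x ^ (-s) := by
        rw [← Real.rpow_add hx, ← Real.rpow_neg_one]; ring_nf
    _ ≤ N ^ (s - 1) * y ^ (-s) :=
        mul_le_mul (Real.rpow_le_rpow_of_nonpos hN hNx (by linarith))
          (Real.rpow_le_rpow_of_nonpos hy hyx (by linarith)) (by positivity) (by positivity)

theorem abs_phase_inv_le {N s : ℝ} (hN : 0 < N) (hs0 : 0 ≤ s) (hs1 : s ≤ 1) {n : ℤ}
    {p : ℤ × ℤ × ℤ} (hp : largePhase N n p) :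
    |(phase n p : ℝ)|⁻¹ ≤
      N ^ (s - 1) * (|((n - p.1 : ℤ) : ℝ)| ^ (-s) * |((n - p.2.2 : ℤ) : ℝ)| ^ (-s)) := by
  obtain ⟨hn, h21, h23, hNΦ⟩ := hp
  have ha : 0 < |((n - p.1 : ℤ) : ℝ)| := abs_pos.mpr (Int.cast_ne_zero.mpr (by omega))
  have hb : 0 < |((n - p.2.2 : ℤ) : ℝ)| := abs_pos.mpr (Int.cast_ne_zero.mpr (by omega))
  have hΦ : |(phase n p : ℝ)| = 2 * (|((n - p.1 : ℤ) : ℝ)| * |((n - p.2.2 : ℤ) : ℝ)|) := by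
    simp [phase, abs_mul]; ring
  rw [← Real.mul_rpow ha.le hb.le]
  exact inv_le_rpow_mul_rpow_neg hN hNΦ.le (mul_pos ha hb)
    (by rw [hΦ]; linarith [mul_pos ha hb]) hs0 hs1

theorem norm_term4_le {N s : ℝ} (hN : 0 < N) (hs0 : 0 ≤ s) (hs1 : s ≤ 1) {v : ℤ → ℂ}
    (hv : Memℓ2 v) (t : ℝ) {n : ℤ} {p : ℤ × ℤ × ℤ} (hp : largePhase N n p) :
    ‖term4 t v n p‖ ≤ 3 * (∑' k, ‖v k‖ ^ 2) * N ^ (s - 1) *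
      trilinearSummand (fun m : ℤ => |(m : ℝ)| ^ (-s)) (fun m => ‖v m‖) n
        (n - p.1, n - p.2.2) := by
  have hn2 : n - (n - p.1) - (n - p.2.2) = p.2.1 := by have := hp.1; omega
  rw [norm_term4]
  dsimp only [trilinearSummand]
  rw [hn2, sub_sub_cancel, sub_sub_cancel]
  calc _ ≤ N ^ (s - 1) * (|((n - p.1 : ℤ) : ℝ)| ^ (-s) * |((n - p.2.2 : ℤ) : ℝ)| ^ (-s)) *
        (3 * (∑' k, ‖v k‖ ^ 2) * ‖v p.1‖ * ‖v p.2.1‖ * ‖v p.2.2‖) :=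
        mul_le_mul (abs_phase_inv_le hN hs0 hs1 hp) (by gcongr; exact norm_Rres_le hv p.1)
          (by positivity) (by positivity)
    _ = _ := by ring

theorem injective_largePhase_outer (N : ℝ) (n : ℤ) :
    Function.Injective fun p : {p : ℤ × ℤ × ℤ // largePhase N n p} =>
      (n - p.1.1, n - p.1.2.2) := by
  rintro ⟨⟨a₁, a₂, a₃⟩, ha⟩ ⟨⟨b₁, b₂, b₃⟩, hb⟩ h
  have ha₂ := ha.1; have hb₂ := hb.1
  simp only [Prod.mk.injEq] at h ha₂ hb₂
  ext <;> simp <;> omega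

theorem summable_norm_term4_and_norm_N4_le {N s : ℝ} (hN : 0 < N) (hs0 : 0 ≤ s) (hs1 : s ≤ 1)
    {v : ℤ → ℂ} (hv : Memℓ2 v) (t : ℝ) (n : ℤ)
    (hF : Summable (trilinearSummand (fun m : ℤ => |(m : ℝ)| ^ (-s)) (fun m => ‖v m‖) n)) :
    (Summable fun p : {p : ℤ × ℤ × ℤ // largePhase N n p} => ‖term4 t v n p.1‖) ∧
      ‖N4 N t v n‖ ≤ 3 * (∑' k, ‖v k‖ ^ 2) * N ^ (s - 1) *
        ∑' q, trilinearSummand (fun m : ℤ => |(m : ℝ)| ^ (-s)) (fun m => ‖v m‖) n q := by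
  have hF0 := trilinearSummand_nonneg (g := fun m : ℤ => |(m : ℝ)| ^ (-s))
    (fun m => by positivity) (fun m => norm_nonneg (v m)) n
  have hinj := injective_largePhase_outer N n
  have hle (p : {p : ℤ × ℤ × ℤ // largePhase N n p}) := norm_term4_le hN hs0 hs1 hv t p.2
  have hsum : Summable fun p : {p : ℤ × ℤ × ℤ // largePhase N n p} => ‖term4 t v n p.1‖ :=
    ((hF.comp_injective hinj).mul_left _).of_nonneg_of_le (fun _ => norm_nonneg _) hle
  refine ⟨hsum, ?_⟩
  calc ‖N4 N t v n‖ ≤ ∑' p : {p : ℤ × ℤ × ℤ // largePhase N n p}, ‖term4 t v n p.1‖ :=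
        norm_tsum_le_tsum_norm hsum
    _ ≤ _ := by
        rw [← tsum_mul_left]
        exact hsum.tsum_le_tsum_of_inj _ hinj (fun q _ => mul_nonneg (by positivity) (hF0 q))
          hle (hF.mul_left _)

theorem memℓ2_and_l2norm_le_of_norm_le {u : ℤ → ℂ} {T : ℤ → ℝ} {c B : ℝ} (hc : 0 ≤ c)
    (hu : ∀ n, ‖u n‖ ≤ c * T n) (hT : Summable fun n => T n ^ 2) (hB : ∑' n, T n ^ 2 ≤ B) :
    Memℓ2 u ∧ l2norm u ≤ c * √B := by
  have hsq (n : ℤ) : ‖u n‖ ^ 2 ≤ c ^ 2 * T n ^ 2 := by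
    rw [← mul_pow]; exact pow_le_pow_left₀ (norm_nonneg _) (hu n) 2
  have hmem : Memℓ2 u := (hT.mul_left _).of_nonneg_of_le (fun _ => sq_nonneg _) hsq
  refine ⟨hmem, ?_⟩
  calc l2norm u ≤ √(c ^ 2 * B) := by
        refine Real.sqrt_le_sqrt ((hmem.tsum_le_tsum hsq (hT.mul_left _)).trans ?_)
        rw [tsum_mul_left]; gcongr
    _ = c * √B := by rw [Real.sqrt_mul (sq_nonneg c), Real.sqrt_sq hc]

/-- **Bound on the resonant-derivative term `N₄`.** For every `ε > 0` there is `C > 0` such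
that for every `N ≥ 1`, `t ∈ ℝ`, and `v ∈ ℓ²(ℤ;ℂ)`: the series defining `N₄(v)(n)` converges
absolutely for each `n`, and `N₄(v) ∈ ℓ²(ℤ;ℂ)` with `‖N₄(v)‖ ≤ C N^{−1/2+ε} ‖v‖⁵`. -/
theorem N4_bound : ∀ ε > (0:ℝ), ∃ C > (0:ℝ), ∀ N : ℝ, 1 ≤ N → ∀ t : ℝ,
    ∀ v : ℤ → ℂ, Memℓ2 v →
    (∀ n : ℤ, Summable fun p : {p : ℤ × ℤ × ℤ // largePhase N n p} => ‖term4 t v n p.1‖) ∧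
    Memℓ2 (N4 N t v) ∧
    l2norm (N4 N t v) ≤ C * N ^ (-(1:ℝ)/2 + ε) * l2norm v ^ 5 := by
  intro ε hε
  set s := min (1 / 2 + ε) 1
  have hs : 1 / 2 < s := lt_min (by linarith) (by norm_num)
  have hs1 : s ≤ 1 := min_le_right _ _
  have hsε : s - 1 ≤ -(1:ℝ)/2 + ε := by linarith [min_le_left (1 / 2 + ε) 1]
  have hg := summable_sq_abs_int_rpow_neg hs
  set A := ∑' m : ℤ, (|(m : ℝ)| ^ (-s)) ^ 2
  have hA : 0 < A := hg.tsum_pos (fun _ => sq_nonneg _) 1 (by simp)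
  refine ⟨3 * A, by positivity, fun N hN t v hv => ?_⟩
  obtain ⟨hF, hT, hTle⟩ := summable_sq_tsum_trilinearSummand_and_tsum_le
    (g := fun m : ℤ => |(m : ℝ)| ^ (-s)) (fun m => by positivity) (fun m => norm_nonneg (v m))
    hg hv
  have hN4 n := summable_norm_term4_and_norm_N4_le (zero_lt_one.trans_le hN) (by linarith) hs1
    hv t n (hF n)
  obtain ⟨hmem, hnorm⟩ :=
    memℓ2_and_l2norm_le_of_norm_le (by positivity) (fun n => (hN4 n).2) hT hTle
  refine ⟨fun n => (hN4 n).1, hmem, hnorm.trans ?_⟩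
  have hE : ∑' k, ‖v k‖ ^ 2 = l2norm v ^ 2 :=
    (Real.sq_sqrt (tsum_nonneg fun _ => sq_nonneg _)).symm
  have hl2 : 0 ≤ l2norm v := Real.sqrt_nonneg _
  rw [hE, show A ^ 2 * (l2norm v ^ 2) ^ 3 = (A * l2norm v ^ 3) ^ 2 by ring,
    Real.sqrt_sq (by positivity)]
  calc _ = 3 * A * N ^ (s - 1) * l2norm v ^ 5 := by ring
    _ ≤ _ := by gcongr
end
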